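/- Let F be the formal power series over ℚ whose coefficient of q^n is (n+1)·σ₁(n+1), i.e., F = Σ_{k≥1} k·σ₁(k)·q^{k−1}. Then for every natural number g ≥ 1, the Bryan–Leung count N_{g,8} := g · (coefficient of q^8 in F^{g−1}) satisfies N_{g,8} = (3/35)·g(g−1)(486g⁷ − 7938g⁶ + 69930g⁵ − 389970g⁴ + 1413384g³ − 3216332g² + 4143290g − 2279375). -/

import Mathlib

/-!
Since `F` has constant term `1`, the coefficient of `q^k` in `F^m` is a polynomial in `m` of
degree `k`. For `k ≤ 8` these polynomials are verified by induction on `m` through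
`F^(m+1) = F^m · F`, which only involves the coefficients `1, 6, 12, 28, 30, 72, 56, 120, 117`
of `F` up to `q^8`; `N_{g,8}` is `g` times the polynomial for `k = 8` evaluated at `m = g - 1`.
-/

/-- The Bryan–Leung power series `F = Σ_{k≥1} k·σ₁(k)·q^{k−1}` over `ℚ`,
whose coefficient of `q^n` is `(n+1)·σ₁(n+1)`. -/
noncomputable def FBL : PowerSeries ℚ :=
  PowerSeries.mk fun n => (((n + 1) * ArithmeticFunction.sigma 1 (n + 1) : ℕ) : ℚ)

open PowerSeries ArithmeticFunction Finset
open scoped ArithmeticFunction.sigma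

lemma coeff_pow_succ_eq_sum {R : Type*} [CommSemiring R] (f : R⟦X⟧) (m n : ℕ) :
    coeff n (f ^ (m + 1)) = ∑ i ∈ range (n + 1), coeff i (f ^ m) * coeff (n - i) f := by
  rw [pow_succ, coeff_mul, Nat.sum_antidiagonal_eq_sum_range_succ_mk]

def fblPowCoeff (k : ℕ) (m : ℚ) : ℚ :=
  match k with
  | 0 => 1
  | 1 => 6 * m
  | 2 => -6 * m + 18 * m ^ 2
  | 3 => 28 * m - 36 * m ^ 2 + 36 * m ^ 3
  | 4 => -102 * m + 186 * m ^ 2 - 108 * m ^ 3 + 54 * m ^ 4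
  | 5 => 1956 / 5 * m - 780 * m ^ 2 + 612 * m ^ 3 - 216 * m ^ 4 + 324 / 5 * m ^ 5
  | 6 => -1488 * m + 16756 / 5 * m ^ 2 - 2880 * m ^ 3 + 1332 * m ^ 4 - 324 * m ^ 5
      + 324 / 5 * m ^ 6
  | 7 => 40368 / 7 * m - 70656 / 5 * m ^ 2 + 67848 / 5 * m ^ 3 - 6912 * m ^ 4 + 2160 * m ^ 5
      - 1944 / 5 * m ^ 6 + 1944 / 35 * m ^ 7
  | 8 => -22845 * m + 2088966 / 35 * m ^ 2 - 310956 / 5 * m ^ 3 + 176166 / 5 * m ^ 4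
      - 12204 * m ^ 5 + 13932 / 5 * m ^ 6 - 1944 / 5 * m ^ 7 + 1458 / 35 * m ^ 8
  | _ => 0

lemma coeff_FBL (n : ℕ) : coeff n FBL = (n + 1) * σ 1 (n + 1) := by
  simp [FBL]

lemma coeff_FBL_pow {k : ℕ} (hk : k ≤ 8) (m : ℕ) : coeff k (FBL ^ m) = fblPowCoeff k m := by
  induction m generalizing k with
  | zero => interval_cases k <;> simp [fblPowCoeff, coeff_one]
  | succ m ih =>
    rw [coeff_pow_succ_eq_sum, sum_congr rfl fun i hi => by
      rw [ih (by grind), coeff_FBL]]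
    interval_cases k <;>
      simp [sum_range_succ, sigma_apply, Nat.divisors_ofNat, fblPowCoeff] <;> ring

/-- The Bryan–Leung count `N_{g,8} := g · (coefficient of q^8 in F^{g−1})`
is given by the node polynomial of Table (5.1). -/
theorem N_g_8 (g : ℕ) (hg : 1 ≤ g) :
    (g : ℚ) * (PowerSeries.coeff (R := ℚ) 8) (FBL ^ (g - 1)) =
      (3 / 35 : ℚ) * (g : ℚ) * ((g : ℚ) - 1) * (486 * (g : ℚ) ^ 7 - 7938 * (g : ℚ) ^ 6 + 69930 * (g : ℚ) ^ 5 - 389970 * (g : ℚ) ^ 4 + 1413384 * (g : ℚ) ^ 3 - 3216332 * (g : ℚ) ^ 2 + 4143290 * (g : ℚ) - 2279375) := by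
  obtain ⟨m, rfl⟩ := Nat.exists_eq_add_of_le hg
  rw [Nat.add_sub_cancel_left, coeff_FBL_pow le_rfl, fblPowCoeff]
  push_cast
  ring
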